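/- Let (x₁, y₁, z₁) and (x₂, y₂, z₂) be orthonormal frames in ℝ³, let r ∈ ℝ³ with r ≠ 0, write u = r/|r|, let σ ∈ {−1, +1}, and let η, μ > 0 be real constants with μ > η/2. Define F_c(r, x₂, y₂, x₁) = σ·η·(u·x₂)(u·y₂) + μ·[ −x₁·y₂ + 2 (u·x₁)(u·y₂) ] (and correspondingly with z in place of y, and with (−r, x₁, ·, x₂) in place of (r, x₂, ·, x₁)). Then [ −x₁·y₂ + 2(u·x₁)(u·y₂) ]·F_c(r,x₂,y₂,x₁) + [ −x₂·y₁ + 2(u·x₂)(u·y₁) ]·F_c(−r,x₁,y₁,x₂) + [ −x₁·z₂ + 2(u·x₁)(u·z₂) ]·F_c(r,x₂,z₂,x₁) + [ −x₂·z₁ + 2(u·x₂)(u·z₁) ]·F_c(−r,x₁,z₁,x₂) ≥ 0. -/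

import Mathlib

/-!
Put `u = r/|r|` and let `R` be the reflection in the line `ℝ u`; every bracket
`-x₁·y₂ + 2(u·x₁)(u·y₂)` is `⟪R x₁, y₂⟫`. Expanding in the two frames (Parseval) turns the
left-hand side into `2μ(1 - q²) + σηD` with `a = u·x₁`, `b = u·x₂`, `q = ⟪R x₁, x₂⟫` and
`D = 2ab - q(a² + b²)`. Now `1 - q² ± D = G + (a ± b)²(1 ∓ q)`, where
`G = (1 - a²)(1 - b²) - (x₁·x₂ - ab)² ≥ 0` is the Gram determinant of `u, x₁, x₂` and `|q| ≤ 1`.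
Hence `|D| ≤ 1 - q²`, and `2μ > η` concludes.
-/

open RealInnerProductSpace

/-- An orthonormal frame in ℝ³: an ordered triple of pairwise orthogonal unit vectors. -/
def IsONFrame (x y z : EuclideanSpace ℝ (Fin 3)) : Prop :=
  ‖x‖ = 1 ∧ ‖y‖ = 1 ∧ ‖z‖ = 1 ∧ ⟪x, y⟫ = 0 ∧ ⟪x, z⟫ = 0 ∧ ⟪y, z⟫ = 0

/-- The circling interaction term
`F_c(r, x₂, y₂, x₁) = σ η (u·x₂)(u·y₂) + μ[ −x₁·y₂ + 2 (u·x₁)(u·y₂) ]` with `u = r/|r|`. -/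
noncomputable def Fcirc (σ η μ : ℝ) (r x₂ y₂ x₁ : EuclideanSpace ℝ (Fin 3)) : ℝ :=
  σ * η * (⟪‖r‖⁻¹ • r, x₂⟫ * ⟪‖r‖⁻¹ • r, y₂⟫) +
    μ * (-⟪x₁, y₂⟫ + 2 * ⟪‖r‖⁻¹ • r, x₁⟫ * ⟪‖r‖⁻¹ • r, y₂⟫)

lemma IsONFrame.orthonormal {x y z : EuclideanSpace ℝ (Fin 3)} (h : IsONFrame x y z) :
    Orthonormal ℝ ![x, y, z] := by
  obtain ⟨hx, hy, hz, hxy, hxz, hyz⟩ := h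
  rw [orthonormal_iff_ite]
  intro i j
  fin_cases i <;> fin_cases j <;> simp [hx, hy, hz, hxy, hxz, hyz, real_inner_comm]

lemma IsONFrame.inner_eq_sum {x y z : EuclideanSpace ℝ (Fin 3)} (h : IsONFrame x y z)
    (v w : EuclideanSpace ℝ (Fin 3)) :
    ⟪v, w⟫ = ⟪v, x⟫ * ⟪w, x⟫ + ⟪v, y⟫ * ⟪w, y⟫ + ⟪v, z⟫ * ⟪w, z⟫ := by
  let b := OrthonormalBasis.mk h.orthonormal
    (h.orthonormal.linearIndependent.span_eq_top_of_card_eq_finrank (by simp)).ge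
  simpa [b, Fin.sum_univ_three, real_inner_comm] using (b.sum_inner_mul_inner v w).symm

lemma Submodule.inner_reflection_left {𝕜 F : Type*} [RCLike 𝕜] [NormedAddCommGroup F]
    [InnerProductSpace 𝕜 F] (K : Submodule 𝕜 F) [K.HasOrthogonalProjection] (x y : F) :
    inner 𝕜 (K.reflection x) y = inner 𝕜 x (K.reflection y) := by
  rw [← K.reflection.inner_map_map x (K.reflection y), K.reflection_reflection]

section

variable {E : Type*} [NormedAddCommGroup E] [InnerProductSpace ℝ E]

lemma inner_reflection_span_singleton {u : E} (hu : ‖u‖ = 1) (x y : E) :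
    ⟪(ℝ ∙ u).reflection x, y⟫ = -⟪x, y⟫ + 2 * ⟪u, x⟫ * ⟪u, y⟫ := by
  rw [Submodule.reflection_apply, Submodule.starProjection_unit_singleton ℝ hu]
  simp only [inner_sub_left, two_smul, inner_add_left, real_inner_smul_left]
  ring

lemma sq_inner_sub_mul_inner_le {u : E} (hu : ‖u‖ = 1) (x y : E) :
    (⟪x, y⟫ - ⟪u, x⟫ * ⟪u, y⟫) ^ 2 ≤ (‖x‖ ^ 2 - ⟪u, x⟫ ^ 2) * (‖y‖ ^ 2 - ⟪u, y⟫ ^ 2) := by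
  have h := real_inner_mul_inner_self_le (x - ⟪u, x⟫ • u) (y - ⟪u, y⟫ • u)
  have huu : ⟪u, u⟫ = 1 := by rw [real_inner_self_eq_norm_sq, hu, one_pow]
  simp only [inner_sub_left, inner_sub_right, real_inner_smul_left, real_inner_smul_right,
    huu, real_inner_comm u x, real_inner_comm u y] at h
  rw [real_inner_self_eq_norm_sq x, real_inner_self_eq_norm_sq y] at h
  linear_combination h

lemma abs_circling_cross_term_le {u x y : E} (hu : ‖u‖ = 1) (hx : ‖x‖ = 1) (hy : ‖y‖ = 1) :
    |2 * ⟪u, x⟫ * ⟪u, y⟫ - ⟪(ℝ ∙ u).reflection x, y⟫ * (⟪u, x⟫ ^ 2 + ⟪u, y⟫ ^ 2)| ≤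
      1 - ⟪(ℝ ∙ u).reflection x, y⟫ ^ 2 := by
  have hgram := sq_inner_sub_mul_inner_le hu x y
  have hq := abs_real_inner_le_norm ((ℝ ∙ u).reflection x) y
  rw [LinearIsometryEquiv.norm_map, hx, hy, one_mul, abs_le] at hq
  rw [inner_reflection_span_singleton hu] at hq ⊢
  rw [hx, hy, one_pow] at hgram
  set s := ⟪u, x⟫
  set t := ⟪u, y⟫
  rw [abs_le]
  constructor
  · linear_combination hgram + mul_nonneg (sq_nonneg (s + t)) (sub_nonneg.2 hq.2)
  · linear_combination hgram + mul_nonneg (sq_nonneg (s - t)) (neg_le_iff_add_nonneg.1 hq.1)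

end

lemma two_mul_add_mul_nonneg_of_abs_le {σ η μ A D : ℝ} (hσ : |σ| ≤ 1) (hη : 0 ≤ η)
    (hμ : η ≤ 2 * μ) (hD : |D| ≤ A) : 0 ≤ 2 * μ * A + σ * η * D := by
  have hA : 0 ≤ A := (abs_nonneg D).trans hD
  have h : |σ * η * D| ≤ 2 * μ * A := by
    rw [abs_mul, abs_mul, abs_of_nonneg hη]
    calc |σ| * η * |D| ≤ 1 * η * A := by gcongr
      _ ≤ 2 * μ * A := by rw [one_mul]; exact mul_le_mul_of_nonneg_right hμ hA
  linarith [neg_abs_le (σ * η * D)]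

lemma Fcirc_neg (σ η μ : ℝ) (r x y x' : EuclideanSpace ℝ (Fin 3)) :
    Fcirc σ η μ (-r) x y x' = Fcirc σ η μ r x y x' := by
  simp [Fcirc]

lemma IsONFrame.circling_pair_eq {x y z : EuclideanSpace ℝ (Fin 3)} (h : IsONFrame x y z)
    (w u : EuclideanSpace ℝ (Fin 3)) (σ η μ : ℝ) :
    ⟪w, y⟫ * (σ * η * (⟪u, x⟫ * ⟪u, y⟫) + μ * ⟪w, y⟫) +
        ⟪w, z⟫ * (σ * η * (⟪u, x⟫ * ⟪u, z⟫) + μ * ⟪w, z⟫) =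
      μ * (‖w‖ ^ 2 - ⟪w, x⟫ ^ 2) + σ * η * ⟪u, x⟫ * (⟪w, u⟫ - ⟪w, x⟫ * ⟪u, x⟫) := by
  have hww := h.inner_eq_sum w w
  have hwu := h.inner_eq_sum w u
  rw [real_inner_self_eq_norm_sq] at hww
  linear_combination -μ * hww - σ * η * ⟪u, x⟫ * hwu

theorem stmt12_general (x₁ y₁ z₁ x₂ y₂ z₂ : EuclideanSpace ℝ (Fin 3))
    (h1 : IsONFrame x₁ y₁ z₁) (h2 : IsONFrame x₂ y₂ z₂)
    (r : EuclideanSpace ℝ (Fin 3)) (hr : r ≠ 0)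
    (σ : ℝ) (hσ : σ = -1 ∨ σ = 1)
    (η μ : ℝ) (hη : 0 < η) (hμ : η / 2 < μ) :
    (-⟪x₁, y₂⟫ + 2 * ⟪‖r‖⁻¹ • r, x₁⟫ * ⟪‖r‖⁻¹ • r, y₂⟫) * Fcirc σ η μ r x₂ y₂ x₁ +
    (-⟪x₂, y₁⟫ + 2 * ⟪‖r‖⁻¹ • r, x₂⟫ * ⟪‖r‖⁻¹ • r, y₁⟫) * Fcirc σ η μ (-r) x₁ y₁ x₂ +
    (-⟪x₁, z₂⟫ + 2 * ⟪‖r‖⁻¹ • r, x₁⟫ * ⟪‖r‖⁻¹ • r, z₂⟫) * Fcirc σ η μ r x₂ z₂ x₁ +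
    (-⟪x₂, z₁⟫ + 2 * ⟪‖r‖⁻¹ • r, x₂⟫ * ⟪‖r‖⁻¹ • r, z₁⟫) * Fcirc σ η μ (-r) x₁ z₁ x₂ ≥ 0 := by
  rw [Fcirc_neg, Fcirc_neg]
  unfold Fcirc
  set u := ‖r‖⁻¹ • r
  have hu : ‖u‖ = 1 := norm_smul_inv_norm hr
  simp only [← inner_reflection_span_singleton hu]
  set R := (ℝ ∙ u).reflection
  have hRu (x : EuclideanSpace ℝ (Fin 3)) : ⟪R x, u⟫ = ⟪u, x⟫ := by
    rw [Submodule.inner_reflection_left,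
      Submodule.reflection_mem_subspace_eq_self (Submodule.mem_span_singleton_self u),
      real_inner_comm]
  have hsymm : ⟪R x₂, x₁⟫ = ⟪R x₁, x₂⟫ := by
    rw [Submodule.inner_reflection_left, real_inner_comm]
  have h₂ := h2.circling_pair_eq (R x₁) u σ η μ
  have h₁ := h1.circling_pair_eq (R x₂) u σ η μ
  rw [LinearIsometryEquiv.norm_map, h1.1, hRu] at h₂
  rw [LinearIsometryEquiv.norm_map, h2.1, hRu, hsymm] at h₁
  have hσ_abs : |σ| ≤ 1 := by rcases hσ with rfl | rfl <;> norm_num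
  have key := two_mul_add_mul_nonneg_of_abs_le hσ_abs hη.le (by linarith : η ≤ 2 * μ)
    (abs_circling_cross_term_le hu h1.1 h2.1)
  linear_combination key - h₁ - h₂

theorem stmt12 (x₁ y₁ z₁ x₂ y₂ z₂ : EuclideanSpace ℝ (Fin 3))
    (h1 : IsONFrame x₁ y₁ z₁) (h2 : IsONFrame x₂ y₂ z₂)
    (r : EuclideanSpace ℝ (Fin 3)) (hr : r ≠ 0)
    (σ : ℝ) (hσ : σ = -1 ∨ σ = 1)
    (η μ : ℝ) (hη : 0 < η) (hμ0 : 0 < μ) (hμ : η / 2 < μ) :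
    (-⟪x₁, y₂⟫ + 2 * ⟪‖r‖⁻¹ • r, x₁⟫ * ⟪‖r‖⁻¹ • r, y₂⟫) * Fcirc σ η μ r x₂ y₂ x₁ +
    (-⟪x₂, y₁⟫ + 2 * ⟪‖r‖⁻¹ • r, x₂⟫ * ⟪‖r‖⁻¹ • r, y₁⟫) * Fcirc σ η μ (-r) x₁ y₁ x₂ +
    (-⟪x₁, z₂⟫ + 2 * ⟪‖r‖⁻¹ • r, x₁⟫ * ⟪‖r‖⁻¹ • r, z₂⟫) * Fcirc σ η μ r x₂ z₂ x₁ +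
    (-⟪x₂, z₁⟫ + 2 * ⟪‖r‖⁻¹ • r, x₂⟫ * ⟪‖r‖⁻¹ • r, z₁⟫) * Fcirc σ η μ (-r) x₁ z₁ x₂ ≥ 0 :=
  stmt12_general x₁ y₁ z₁ x₂ y₂ z₂ h1 h2 r hr σ hσ η μ hη hμ
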